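/- Theorem 3.2 (existence content): For every ε > 0, every rent-division instance satisfying the standing assumptions admits an ε-envy-free solution (π, p) with p r ≥ 0 for every room r and v a (π a) (p (π a)) ≥ 0 for every agent a. -/

import Mathlib

/-- A function `f : ℝ → ℝ` is piecewise linear: there are finitely many
breakpoints `b 0 < … < b t` such that `f` is affine on `(-∞, b 0]`, on each
`[b i, b (i+1)]`, and on `[b t, ∞)`. -/
def PiecewiseLinear (f : ℝ → ℝ) : Prop :=
  ∃ (t : ℕ) (b : Fin (t + 1) → ℝ), StrictMono b ∧
    (∃ m c : ℝ, ∀ x ≤ b 0, f x = m * x + c) ∧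
    (∀ i : Fin t, ∃ m c : ℝ,
      ∀ x ∈ Set.Icc (b i.castSucc) (b i.succ), f x = m * x + c) ∧
    (∃ m c : ℝ, ∀ x, b (Fin.last t) ≤ x → f x = m * x + c)

/-- A solution `(π, p)` is `ε`-envy-free. -/
def EpsEF (n : ℕ) (ε : ℝ) (v : Fin n → Fin n → ℝ → ℝ)
    (π : Equiv.Perm (Fin n)) (p : Fin n → ℝ) : Prop :=
  ∀ a : Fin n,
    (0 ≤ v a (π a) (p (π a)) →
      ∀ r, v a r (p r) ≤ (1 + ε) * v a (π a) (p (π a))) ∧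
    (v a (π a) (p (π a)) < 0 →
      ∀ r, (1 + ε) * v a r (p r) ≤ v a (π a) (p (π a)))

/-!
An ascending auction. An unassigned agent `a` looks at its favourite room `rs`: if its utility
there is at most `η`, it takes a free room (free rooms cost `0`, so its utility stays
nonnegative); otherwise it evicts the holder of `rs` and raises the price of `rs` until its own
utility for `rs` has dropped by exactly `η`. Every holder then envies every other room by at most
`η`, and prices stay in `[0, C]`, where `C` is a price at which all utilities are negative; `C`
exists because the last linear piece of a strictly decreasing piecewise linear function has
negative slope. By uniform continuity on `[0, C]`, each raise increases the total price by a
fixed `δ > 0`, so the auction terminates. Finally, some permutation carries `η`-envy-free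
solutions for arbitrarily small `η`; compactness of `[0, C]ⁿ` gives an exactly envy-free
solution with nonnegative utilities, which is `ε`-envy-free for every `ε > 0`.
-/

open Filter Topology Set

theorem PiecewiseLinear.tendsto_atBot {f : ℝ → ℝ} (hpl : PiecewiseLinear f) (hf : StrictAnti f) :
    Tendsto f atTop atBot := by
  obtain ⟨t, b, -, -, -, m, c, hlast⟩ := hpl
  have hm : m < 0 := by
    have := hf (lt_add_one (b (Fin.last t)))
    rw [hlast _ le_rfl, hlast _ (le_add_of_nonneg_right zero_le_one)] at this
    linarith
  refine (tendsto_atBot_add_const_right _ c (tendsto_id.const_mul_atTop_of_neg hm)).congr' ?_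
  filter_upwards [eventually_ge_atTop (b (Fin.last t))] with x hx using (hlast x hx).symm

theorem exists_pos_forall_dist_lt_of_isCompact {ι X Y : Type*} [Finite ι] [PseudoMetricSpace X]
    [PseudoMetricSpace Y] {f : ι → X → Y} {s : Set X} (hs : IsCompact s)
    (hf : ∀ i, ContinuousOn (f i) s) {η : ℝ} (hη : 0 < η) :
    ∃ δ > 0, ∀ i, ∀ x ∈ s, ∀ y ∈ s, dist x y < δ → dist (f i x) (f i y) < η := by
  have hsmall : ∀ i, ∀ᶠ δ in 𝓝[>] (0 : ℝ),
      ∀ x ∈ s, ∀ y ∈ s, dist x y < δ → dist (f i x) (f i y) < η := fun i => by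
    obtain ⟨δ, hδ, h⟩ :=
      Metric.uniformContinuousOn_iff.mp (hs.uniformContinuousOn_of_continuous (hf i)) η hη
    filter_upwards [Ioo_mem_nhdsGT hδ] with δ' hδ' x hx y hy hxy
    exact h x hx y hy (hxy.trans hδ'.2)
  obtain ⟨δ, hδ, hpos⟩ := ((eventually_all.2 hsmall).and self_mem_nhdsWithin).exists
  exact ⟨δ, hpos, hδ⟩

theorem IsCompact.exists_mem_of_frequently {X Y : Type*} [TopologicalSpace X] [TopologicalSpace Y]
    {K : Set X} (hK : IsCompact K) {S : Set (Y × X)} (hS : IsClosed S) {l : Filter Y} {y₀ : Y}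
    (hl : l ≤ 𝓝 y₀) (h : ∃ᶠ y in l, ∃ x ∈ K, (y, x) ∈ S) : ∃ x ∈ K, (y₀, x) ∈ S := by
  have := isCompact_iff_compactSpace.mp hK
  have hT : IsClosed (Prod.fst '' {z : Y × K | (z.1, (z.2 : X)) ∈ S}) :=
    isClosedMap_fst_of_compactSpace _ (hS.preimage (by fun_prop))
  obtain ⟨⟨y, x, hx⟩, hS, rfl⟩ := hT.mem_of_frequently_of_tendsto (f := id)
    (h.mono fun y ⟨x, hx, hyx⟩ => ⟨(y, ⟨x, hx⟩), hyx, rfl⟩) hl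
  exact ⟨x, hx, hS⟩

theorem Finite.exists_forall_ne_some {α : Type*} [Finite α] {f : α → Option α} {r₀ : α}
    (hr₀ : f r₀ = none) : ∃ a, ∀ r, f r ≠ some a := by
  by_contra! hall
  choose g hg using hall
  have hg_inj : g.Injective := fun a b hab => Option.some_injective _ <| by rw [← hg a, ← hg b, hab]
  obtain ⟨a, rfl⟩ := (Finite.injective_iff_surjective.mp hg_inj) r₀
  simp [hg a] at hr₀

theorem exists_perm_forall_eq_some {α : Type*} [Finite α] {f : α → Option α}
    (hinj : ∀ r s a, f r = some a → f s = some a → r = s) (hf : ∀ r, f r ≠ none) :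
    ∃ π : Equiv.Perm α, ∀ a, f (π a) = some a := by
  choose g hg using fun r => Option.ne_none_iff_exists'.mp (hf r)
  have hg_inj : g.Injective := fun r s hrs => hinj r s (g s) (hrs ▸ hg r) (hg s)
  refine ⟨(Equiv.ofBijective g (Finite.injective_iff_bijective.mp hg_inj)).symm, fun a => ?_⟩
  rw [hg, Equiv.ofBijective_apply_symm_apply g]

/-- `owner r = some a` means that agent `a` holds room `r` at price `p r`. -/
structure IsAuctionState {α : Type*} (v : α → α → ℝ → ℝ) (C η : ℝ) (owner : α → Option α)
    (p : α → ℝ) : Prop where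
  injective : ∀ r s a, owner r = some a → owner s = some a → r = s
  mem_Icc : ∀ r, p r ∈ Icc 0 C
  eq_zero_of_eq_none : ∀ r, owner r = none → p r = 0
  nonneg : ∀ r a, owner r = some a → 0 ≤ v a r (p r)
  le_add : ∀ r a, owner r = some a → ∀ r', v a r' (p r') ≤ v a r (p r) + η

namespace IsAuctionState

variable {α : Type*} {v : α → α → ℝ → ℝ} {C η : ℝ} {owner : α → Option α} {p : α → ℝ}

theorem empty (hC : 0 ≤ C) : IsAuctionState v C η (fun _ => none) (fun _ => 0) where
  injective := by simp
  mem_Icc _ := ⟨le_rfl, hC⟩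
  eq_zero_of_eq_none _ _ := rfl
  nonneg := by simp
  le_add := by simp

theorem update [DecidableEq α] (h : IsAuctionState v C η owner p)
    (hanti : ∀ a r, Antitone (v a r)) (hη : 0 ≤ η) {a r₀ : α} {q : ℝ}
    (ha : ∀ r, owner r ≠ some a) (hq : q ∈ Icc (p r₀) C) (hnonneg : 0 ≤ v a r₀ q)
    (hbest : ∀ r, v a r (p r) ≤ v a r₀ q + η) :
    IsAuctionState v C η (Function.update owner r₀ (some a)) (Function.update p r₀ q) where
  injective r s b hr hs := by
    simp only [Function.update_apply] at hr hs
    split_ifs at hr hs <;> grind [h.injective r s b]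
  mem_Icc r := by
    rcases eq_or_ne r r₀ with rfl | hr₀
    · simpa using ⟨(h.mem_Icc r).1.trans hq.1, hq.2⟩
    · simpa [Function.update_of_ne hr₀] using h.mem_Icc r
  eq_zero_of_eq_none r hr := by
    rcases eq_or_ne r r₀ with rfl | hr₀
    · simp at hr
    · simp only [Function.update_of_ne hr₀] at hr ⊢
      exact h.eq_zero_of_eq_none r hr
  nonneg r b hr := by
    rcases eq_or_ne r r₀ with rfl | hr₀
    · simp_all
    · simp only [Function.update_of_ne hr₀] at hr ⊢
      exact h.nonneg r b hr
  le_add r b hr r' := by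
    rcases eq_or_ne r r₀ with rfl | hr₀
    · obtain rfl : a = b := by simpa using hr
      rcases eq_or_ne r' r with rfl | hr'
      · simpa using hη
      · simpa [Function.update_of_ne hr'] using hbest r'
    · have hp : p ≤ Function.update p r₀ q := le_update_iff.2 ⟨hq.1, fun _ _ => le_rfl⟩
      simp only [Function.update_of_ne hr₀] at hr ⊢
      exact (hanti b r' (hp r')).trans (h.le_add r b hr r')

section Bidding

variable [Fintype α]

theorem exists_step (h : IsAuctionState v C η owner p) (hcont : ∀ a r, Continuous (v a r))
    (hanti : ∀ a r, StrictAnti (v a r)) (hnonneg : ∀ a r, 0 ≤ v a r 0) (hC : ∀ a r, v a r C < 0)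
    (hη : 0 < η) {δ : ℝ}
    (hδ : ∀ a r, ∀ x ∈ Icc 0 C, ∀ y ∈ Icc 0 C, dist x y < δ → dist (v a r x) (v a r y) < η)
    {r₀ : α} (hr₀ : owner r₀ = none) :
    ∃ owner' p', IsAuctionState v C η owner' p' ∧
      (p' = p ∧ {r | owner' r = none}.ncard < {r | owner r = none}.ncard ∨
        ∑ r, p r + δ ≤ ∑ r, p' r) := by
  classical
  obtain ⟨a, ha⟩ := Finite.exists_forall_ne_some hr₀
  have : Nonempty α := ⟨r₀⟩
  obtain ⟨rs, hrs⟩ := Finite.exists_max fun r => v a r (p r)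
  have hanti' : ∀ a r, Antitone (v a r) := fun a r => (hanti a r).antitone
  by_cases hlow : v a rs (p rs) ≤ η
  · refine ⟨Function.update owner r₀ (some a), p, ?_, Or.inl ⟨rfl, ?_⟩⟩
    · have hfree : 0 ≤ v a r₀ (p r₀) := h.eq_zero_of_eq_none r₀ hr₀ ▸ hnonneg a r₀
      simpa using h.update hanti' hη.le ha ⟨le_rfl, (h.mem_Icc r₀).2⟩ hfree
        fun r => by linarith [hrs r]
    · have : {r | Function.update owner r₀ (some a) r = none} =
          {r | owner r = none} \ {r₀} := by
        ext r
        rcases eq_or_ne r r₀ with rfl | hr <;> simp [Function.update_of_ne, *]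
      rw [this]
      exact ncard_sdiff_singleton_lt_of_mem hr₀
  · obtain ⟨q, hq, hvq⟩ : ∃ q ∈ Icc (p rs) C, v a rs q = v a rs (p rs) - η :=
      intermediate_value_Icc' (h.mem_Icc rs).2 (hcont a rs).continuousOn
        ⟨by linarith [hC a rs], by linarith⟩
    refine ⟨Function.update owner rs (some a), Function.update p rs q,
      h.update hanti' hη.le ha hq (by linarith) fun r => by linarith [hrs r], Or.inr ?_⟩
    have hδq : δ ≤ q - p rs := by
      by_contra! hlt
      have := hδ a rs (p rs) (h.mem_Icc rs) q ⟨(h.mem_Icc rs).1.trans hq.1, hq.2⟩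
        (by rw [Real.dist_eq, abs_of_nonpos] <;> linarith [hq.1])
      rw [hvq, Real.dist_eq, sub_sub_cancel, abs_of_pos hη] at this
      exact this.false
    rw [Finset.sum_update_of_mem (Finset.mem_univ rs),
      ← Finset.add_sum_erase _ _ (Finset.mem_univ rs), Finset.sdiff_singleton_eq_erase]
    linarith

theorem exists_forall_ne_none (h : IsAuctionState v C η owner p)
    (hcont : ∀ a r, Continuous (v a r)) (hanti : ∀ a r, StrictAnti (v a r))
    (hnonneg : ∀ a r, 0 ≤ v a r 0) (hC : ∀ a r, v a r C < 0) (hη : 0 < η) :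
    ∃ owner' p', IsAuctionState v C η owner' p' ∧ ∀ r, owner' r ≠ none := by
  obtain ⟨δ, hδ₀, hδ⟩ := exists_pos_forall_dist_lt_of_isCompact
    (f := fun ar : α × α => v ar.1 ar.2) (isCompact_Icc (a := 0) (b := C))
    (fun ar => (hcont ar.1 ar.2).continuousOn) hη
  -- each bid raises the total price by at least `δ`, and the total price never exceeds `|α| C`
  obtain ⟨N, hN⟩ := exists_nat_gt ((∑ r, (C - p r)) / δ)
  rw [div_lt_iff₀ hδ₀, Finset.sum_sub_distrib] at hN
  induction N generalizing owner p with
  | zero =>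
    have := Finset.sum_le_sum fun r (_ : r ∈ Finset.univ) => (h.mem_Icc r).2
    simp only [CharP.cast_eq_zero, zero_mul] at hN
    linarith
  | succ N ihN =>
    induction hk : {r | owner r = none}.ncard using Nat.strong_induction_on
      generalizing owner p with
    | _ k ihk =>
    by_cases hfree : ∃ r₀, owner r₀ = none
    · obtain ⟨r₀, hr₀⟩ := hfree
      obtain ⟨owner', p', h', ⟨rfl, hlt⟩ | hsum⟩ :=
        h.exists_step hcont hanti hnonneg hC hη (fun a r => hδ (a, r)) hr₀
      · exact ihk _ (hk ▸ hlt) h' hN rfl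
      · exact ihN h' (by push_cast at hN; linarith)
    · exact ⟨owner, p, h, not_exists.mp hfree⟩

end Bidding

end IsAuctionState

/-- Envy-freeness up to an additive `η`, together with individual rationality. -/
def EnvyFreeUpTo {α : Type*} (v : α → α → ℝ → ℝ) (η : ℝ) (π : Equiv.Perm α) (p : α → ℝ) :
    Prop :=
  ∀ a, 0 ≤ v a (π a) (p (π a)) ∧ ∀ r, v a r (p r) ≤ v a (π a) (p (π a)) + η

theorem isClosed_setOf_envyFreeUpTo {α : Type*} {v : α → α → ℝ → ℝ}
    (hcont : ∀ a r, Continuous (v a r)) (π : Equiv.Perm α) :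
    IsClosed {z : ℝ × (α → ℝ) | EnvyFreeUpTo v z.1 π z.2} := by
  simp only [EnvyFreeUpTo, ofPred_forall, ofPred_and]
  exact isClosed_iInter fun a => (isClosed_le continuous_const (by fun_prop)).inter
    (isClosed_iInter fun r => isClosed_le (by fun_prop) (by fun_prop))

section EnvyFree

variable {α : Type*} [Fintype α] {v : α → α → ℝ → ℝ} {C : ℝ}

theorem exists_envyFreeUpTo (hcont : ∀ a r, Continuous (v a r))
    (hanti : ∀ a r, StrictAnti (v a r)) (hnonneg : ∀ a r, 0 ≤ v a r 0) (hC₀ : 0 ≤ C)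
    (hC : ∀ a r, v a r C < 0) {η : ℝ} (hη : 0 < η) :
    ∃ (π : Equiv.Perm α) (p : α → ℝ), p ∈ Icc 0 (fun _ => C) ∧ EnvyFreeUpTo v η π p := by
  obtain ⟨owner, p, h, hfull⟩ :=
    (IsAuctionState.empty hC₀).exists_forall_ne_none hcont hanti hnonneg hC hη
  obtain ⟨π, hπ⟩ := exists_perm_forall_eq_some h.injective hfull
  exact ⟨π, p, ⟨fun r => (h.mem_Icc r).1, fun r => (h.mem_Icc r).2⟩,
    fun a => ⟨h.nonneg _ _ (hπ a), h.le_add _ _ (hπ a)⟩⟩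

theorem exists_envyFreeUpTo_zero (hcont : ∀ a r, Continuous (v a r))
    (hanti : ∀ a r, StrictAnti (v a r)) (hnonneg : ∀ a r, 0 ≤ v a r 0) (hC₀ : 0 ≤ C)
    (hC : ∀ a r, v a r C < 0) :
    ∃ (π : Equiv.Perm α) (p : α → ℝ), p ∈ Icc 0 (fun _ => C) ∧ EnvyFreeUpTo v 0 π p := by
  have happrox : ∀ᶠ η in 𝓝[>] (0 : ℝ), ∃ π : Equiv.Perm α,
      ∃ p ∈ Icc 0 (fun _ => C), (η, p) ∈ {z : ℝ × (α → ℝ) | EnvyFreeUpTo v z.1 π z.2} := by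
    filter_upwards [self_mem_nhdsWithin] with η hη
    exact exists_envyFreeUpTo hcont hanti hnonneg hC₀ hC hη
  obtain ⟨π, hπ⟩ := frequently_exists.mp happrox.frequently
  exact ⟨π, isCompact_Icc.exists_mem_of_frequently (isClosed_setOf_envyFreeUpTo hcont π)
    nhdsWithin_le_nhds hπ⟩

end EnvyFree

/-- Theorem 3.2 (existence content): for any `ε > 0`, under the standing
assumptions there is an `ε`-envy-free solution with nonnegative prices and
nonnegative utilities for all agents. -/
theorem exists_eps_envy_free_nonneg
    (n : ℕ) (v : Fin n → Fin n → ℝ → ℝ)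
    (hcont : ∀ a r, Continuous (v a r))
    (hanti : ∀ a r, StrictAnti (v a r))
    (hpl : ∀ a r, PiecewiseLinear (v a r))
    (hnonneg : ∀ a r, 0 ≤ v a r 0)
    (ε : ℝ) (hε : 0 < ε) :
    ∃ (π : Equiv.Perm (Fin n)) (p : Fin n → ℝ),
      EpsEF n ε v π p ∧
      (∀ r, 0 ≤ p r) ∧
      (∀ a, 0 ≤ v a (π a) (p (π a))) := by
  obtain ⟨C, hC₀, hC⟩ : ∃ C : ℝ, 0 ≤ C ∧ ∀ a r, v a r C < 0 :=
    ((eventually_ge_atTop 0).and (eventually_all.2 fun a => eventually_all.2 fun r =>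
      ((hpl a r).tendsto_atBot (hanti a r)).eventually_lt_atBot 0)).exists
  obtain ⟨π, p, hp, hEF⟩ := exists_envyFreeUpTo_zero hcont hanti hnonneg hC₀ hC
  refine ⟨π, p, fun a => ⟨fun _ r => ?_, fun hneg => absurd (hEF a).1 hneg.not_ge⟩,
    fun r => hp.1 r, fun a => (hEF a).1⟩
  calc v a r (p r) ≤ v a (π a) (p (π a)) := by simpa using (hEF a).2 r
    _ ≤ (1 + ε) * v a (π a) (p (π a)) := le_mul_of_one_le_left (hEF a).1 (by linarith)
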